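/- The following are equivalent: (i) 𝔖(Q) is contained in the cyclic group ⟨σ⟩ generated by the q-cycle σ (equivalently, every element of Q is a rotation); (ii) H is abelian; (iii) W = ⟨σ, 𝔖(Q)⟩ is abelian. -/

import Mathlib

/-
Write a point of `ℝ/ℤ` as `i/q + t` with `0 ≤ t < 1/q`; then `E_τ` acts by `τ` on the arc index `i`
and fixes the offset `t`. A permutation of `ℤ/q` lies in `⟨σ⟩` iff it is a translation
`i ↦ i + τ 0`, and then `E_τ` is the rotation by `τ(0)/q`; conversely a rotation `E_τ` moves every
arc by the same amount, so `τ` is a translation. If `E_τ` only commutes with an irrational rotation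
`R_α`, then `E_τ (kα) = E_τ 0 + kα` along the orbit of `0`, which is dense and so meets every arc:
again `τ` is a translation. Likewise a permutation commuting with `σ` is a power of `σ`.
-/

open Equiv

noncomputable section

/-- The circle `ℝ/ℤ`. -/
abbrev Circ : Type := AddCircle (1 : ℝ)

/-- Rotation by `a` : the bijection `x ↦ x + a` of the circle. -/
def Rot (a : Circ) : Equiv.Perm Circ := Equiv.addRight a

/-- The subgroup `{ p/q mod 1 : p ∈ ℤ }` of the circle. -/
def RatPts (q : ℕ) : AddSubgroup Circ :=
  AddSubgroup.zmultiples (((q : ℝ)⁻¹ : ℝ) : Circ)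

/-- The group of bijections of the circle all of whose displacements lie in `RatPts q`. -/
def Delta (q : ℕ) : Subgroup (Equiv.Perm Circ) where
  carrier := {f | ∀ x : Circ, f x - x ∈ RatPts q}
  one_mem' := by intro x; simpa using zero_mem (RatPts q)
  mul_mem' := by
    intro f g hf hg x
    have h1 : f (g x) - g x ∈ RatPts q := hf (g x)
    have h2 : g x - x ∈ RatPts q := hg x
    have h3 := add_mem h1 h2
    simpa [Equiv.Perm.mul_apply, sub_add_sub_cancel] using h3
  inv_mem' := by
    intro f hf x
    have h1 : f (f⁻¹ x) - f⁻¹ x ∈ RatPts q := hf (f⁻¹ x)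
    rw [show f (f⁻¹ x) = x from f.apply_symm_apply x] at h1
    simpa using neg_mem h1

/-- The subgroup `A` of the circle generated by the classes of `α₁, …, α_s`. -/
def Agrp (s : ℕ) (α : Fin s → ℝ) : AddSubgroup Circ :=
  AddSubgroup.closure (Set.range fun i => ((α i : ℝ) : Circ))

/-- The group `H` generated by the rotations `R_{αᵢ}` and the maps `E_{τⱼ}`. -/
def Hgrp (s m q : ℕ) (α : Fin s → ℝ) (τs : Fin m → Equiv.Perm (Fin q))
    (E : Equiv.Perm (Fin q) → Equiv.Perm Circ) : Subgroup (Equiv.Perm Circ) :=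
  Subgroup.closure ((Set.range fun i => Rot ((α i : ℝ) : Circ)) ∪ (Set.range fun j => E (τs j)))

/-- The group `Q` generated by the maps `E_{τⱼ}`. -/
def Qgrp (m q : ℕ) (τs : Fin m → Equiv.Perm (Fin q))
    (E : Equiv.Perm (Fin q) → Equiv.Perm Circ) : Subgroup (Equiv.Perm Circ) :=
  Subgroup.closure (Set.range fun j => E (τs j))

/-- The subgroup `𝔖(Q)` of `S_q` generated by `τ₁, …, τ_m`. -/
def SQgrp (m q : ℕ) (τs : Fin m → Equiv.Perm (Fin q)) : Subgroup (Equiv.Perm (Fin q)) :=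
  Subgroup.closure (Set.range τs)

/-- The subgroup `W = ⟨σ, τ₁, …, τ_m⟩` of `S_q`, where `σ` is the `q`-cycle. -/
def Wgrp (m q : ℕ) (τs : Fin m → Equiv.Perm (Fin q)) : Subgroup (Equiv.Perm (Fin q)) :=
  Subgroup.closure ({finRotate q} ∪ Set.range τs)

section FinRotate

variable {q : ℕ} [NeZero q]

theorem finRotate_eq_addRight : finRotate q = Equiv.addRight 1 :=
  Equiv.ext finRotate_apply

open Fin.NatCast in
theorem finRotate_pow_val (i : Fin q) : finRotate q ^ (i : ℕ) = Equiv.addRight i := by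
  rw [finRotate_eq_addRight, Equiv.nsmul_addRight, nsmul_one, Fin.cast_val_eq_self]

theorem mem_zpowers_finRotate_iff {τ : Perm (Fin q)} :
    τ ∈ Subgroup.zpowers (finRotate q) ↔ τ = Equiv.addRight (τ 0) := by
  refine ⟨?_, fun h => h ▸ finRotate_pow_val (τ 0) ▸ Subgroup.npow_mem_zpowers _ _⟩
  rintro ⟨k, rfl⟩
  simp [finRotate_eq_addRight]

theorem eq_addRight_of_commute_finRotate {τ : Perm (Fin q)} (h : Commute τ (finRotate q)) :
    τ = Equiv.addRight (τ 0) := by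
  refine Equiv.ext fun i => ?_
  simpa [finRotate_pow_val, add_comm] using congrArg (· 0) (h.pow_right (i : ℕ)).eq

end FinRotate

section Circle

variable {q : ℕ} [NeZero q]

variable (q) in
def finToAddCircle (i : Fin q) : Circ := ((((i : ℕ) : ℝ) / q : ℝ) : Circ)

theorem finToAddCircle_eq_toAddCircle (i : Fin q) :
    finToAddCircle q i = ZMod.toAddCircle ((i : ℕ) : ZMod q) :=
  (ZMod.toAddCircle_natCast _).symm

theorem finToAddCircle_injective : Function.Injective (finToAddCircle q) := by
  intro i j h
  rw [finToAddCircle_eq_toAddCircle, finToAddCircle_eq_toAddCircle, ZMod.toAddCircle_inj,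
    ZMod.natCast_eq_natCast_iff', Nat.mod_eq_of_lt i.isLt, Nat.mod_eq_of_lt j.isLt] at h
  exact Fin.ext h

@[simp]
theorem finToAddCircle_zero : finToAddCircle q 0 = 0 := by
  simp [finToAddCircle]

theorem finToAddCircle_add (i j : Fin q) :
    finToAddCircle q (i + j) = finToAddCircle q i + finToAddCircle q j := by
  simp only [finToAddCircle_eq_toAddCircle, Fin.val_add, ZMod.natCast_mod, Nat.cast_add, map_add]

theorem exists_finToAddCircle_add_eq (x : Circ) :
    ∃ (i : Fin q) (t : ℝ), 0 ≤ t ∧ t < 1 / q ∧ finToAddCircle q i + t = x := by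
  obtain ⟨r, rfl⟩ := QuotientAddGroup.mk_surjective x
  have hq : (0 : ℝ) < q := Nat.cast_pos.2 (NeZero.pos q)
  set y := Int.fract r * q
  have hy : 0 ≤ y := by positivity
  have hiq : ⌊y⌋₊ < q := (Nat.floor_lt hy).2 (mul_lt_of_lt_one_left hq (Int.fract_lt_one r))
  refine ⟨⟨⌊y⌋₊, hiq⟩, Int.fract r - ⌊y⌋₊ / q, ?_, ?_, ?_⟩
  · rw [sub_nonneg, div_le_iff₀ hq]
    exact Nat.floor_le hy
  · rw [sub_lt_iff_lt_add, ← add_div, lt_div_iff₀ hq, add_comm]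
    exact Nat.lt_floor_add_one y
  · rw [finToAddCircle, ← AddCircle.coe_add, add_sub_cancel, AddCircle.coe_fract]

def rotHom : Multiplicative Circ →* Perm Circ where
  toFun a := Rot a.toAdd
  map_one' := Equiv.addRight_zero
  map_mul' a b := by
    rw [toAdd_mul, add_comm]
    exact Equiv.addRight_add _ _

def rotations : Subgroup (Perm Circ) := rotHom.range

instance : IsMulCommutative rotations := Subgroup.range_isMulCommutative rotHom

theorem mem_rotations {f : Perm Circ} : f ∈ rotations ↔ ∃ a, f = Rot a :=
  ⟨fun ⟨a, ha⟩ => ⟨a.toAdd, ha.symm⟩, fun ⟨a, ha⟩ => ⟨.ofAdd a, ha.symm⟩⟩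

theorem Commute.apply_zsmul_of_rot {f : Perm Circ} {a : Circ} (h : Commute f (Rot a)) (k : ℤ) :
    f (k • a) = f 0 + k • a := by
  simpa [Rot, Equiv.zsmul_addRight] using congrArg (· 0) (h.zpow_right k).eq

theorem exists_zsmul_eq_add {a : ℝ} (ha : Irrational a) (c : Circ) {ε : ℝ} (hε : 0 < ε) :
    ∃ (k : ℤ) (t : ℝ), 0 < t ∧ t < ε ∧ k • (a : Circ) = c + t := by
  have hdense : DenseRange (· • (a : Circ) : ℤ → Circ) :=
    AddCircle.denseRange_zsmul_coe_iff.2 (by rwa [div_one])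
  have hopen : IsOpen ((fun t : ℝ => c + t) '' Set.Ioo 0 ε) :=
    ((isOpenMap_add_left c).comp QuotientAddGroup.isOpenMap_coe) _ isOpen_Ioo
  obtain ⟨k, t, ⟨ht0, htε⟩, hkt⟩ :=
    hdense.exists_mem_open hopen ⟨_, (ε / 2), ⟨half_pos hε, half_lt_self hε⟩, rfl⟩
  exact ⟨k, t, ht0, htε, hkt.symm⟩

end Circle

theorem irrational_of_linearIndependent_finCons {s : ℕ} {α : Fin s → ℝ}
    (h : LinearIndependent ℚ (Fin.cons (1 : ℝ) α)) (i : Fin s) : Irrational (α i) := by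
  obtain ⟨hα, h1⟩ := linearIndependent_finCons.1 h
  rintro ⟨r, hr⟩
  have hr0 : r ≠ 0 := by rintro rfl; exact hα.ne_zero i (by simpa using hr.symm)
  apply h1
  have : (1 : ℝ) = r⁻¹ • α i := by rw [← hr, Rat.smul_def]; push_cast; field_simp
  rw [this]
  exact Submodule.smul_mem _ _ (Submodule.subset_span ⟨i, rfl⟩)

/-- `E τ` is the paper's `E_τ`, moving the arc `[i/q, (i+1)/q)` rigidly to `[τ i/q, (τ i+1)/q)`. -/
def IsBlockPerm (q : ℕ) (E : Perm (Fin q) → Perm Circ) : Prop :=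
  ∀ (τ : Perm (Fin q)) (i : Fin q) (t : ℝ), 0 ≤ t → t < 1 / q →
    E τ ((((i : ℕ) : ℝ) / q + t : ℝ) : Circ) = ((((τ i : ℕ) : ℝ) / q + t : ℝ) : Circ)

namespace IsBlockPerm

variable {q : ℕ} {E : Perm (Fin q) → Perm Circ} (hE : IsBlockPerm q E)
include hE

theorem apply_finToAddCircle_add (τ : Perm (Fin q)) (i : Fin q) {t : ℝ} (ht0 : 0 ≤ t)
    (ht : t < 1 / q) : E τ (finToAddCircle q i + t) = finToAddCircle q (τ i) + t :=
  hE τ i t ht0 ht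

variable [NeZero q]

theorem apply_zero (τ : Perm (Fin q)) : E τ 0 = finToAddCircle q (τ 0) := by
  simpa using hE.apply_finToAddCircle_add τ 0 le_rfl (by simp [NeZero.pos q])

theorem addRight_eq_rot (j : Fin q) : E (Equiv.addRight j) = Rot (finToAddCircle q j) := by
  refine Equiv.ext fun x => ?_
  obtain ⟨i, t, ht0, ht, rfl⟩ := exists_finToAddCircle_add_eq (q := q) x
  rw [hE.apply_finToAddCircle_add _ i ht0 ht, Equiv.coe_addRight, finToAddCircle_add]
  exact add_right_comm _ _ _

theorem eq_addRight_of_exists {τ : Perm (Fin q)}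
    (h : ∀ i, ∃ t : ℝ, 0 ≤ t ∧ t < 1 / q ∧
      E τ (finToAddCircle q i + t) = E τ 0 + (finToAddCircle q i + t)) :
    τ = Equiv.addRight (τ 0) := by
  refine Equiv.ext fun i => finToAddCircle_injective ?_
  obtain ⟨t, ht0, ht, hi⟩ := h i
  rw [hE.apply_finToAddCircle_add τ i ht0 ht, hE.apply_zero, ← add_assoc, add_left_inj] at hi
  rw [hi, Equiv.coe_addRight, finToAddCircle_add, add_comm]

theorem eq_addRight_of_eq_rot {τ : Perm (Fin q)} {a : Circ} (h : E τ = Rot a) :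
    τ = Equiv.addRight (τ 0) :=
  hE.eq_addRight_of_exists fun i => ⟨0, le_rfl, by simp [NeZero.pos q], by simp [h, Rot, add_comm]⟩

theorem eq_addRight_of_commute_rot {τ : Perm (Fin q)} {a : ℝ} (ha : Irrational a)
    (h : Commute (E τ) (Rot a)) : τ = Equiv.addRight (τ 0) := by
  refine hE.eq_addRight_of_exists fun i => ?_
  -- the orbit of `0` under the irrational rotation meets the interior of every arc
  obtain ⟨k, t, ht0, ht, hk⟩ :=
    exists_zsmul_eq_add ha (finToAddCircle q i) (by simp [NeZero.pos q] : (0 : ℝ) < 1 / q)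
  exact ⟨t, ht0.le, ht, hk ▸ h.apply_zsmul_of_rot k⟩

theorem mem_rotations_iff {τ : Perm (Fin q)} :
    E τ ∈ rotations ↔ τ ∈ Subgroup.zpowers (finRotate q) := by
  rw [mem_rotations, mem_zpowers_finRotate_iff]
  exact ⟨fun ⟨_, ha⟩ => hE.eq_addRight_of_eq_rot ha,
    fun h => ⟨_, (congrArg E h).trans (hE.addRight_eq_rot _)⟩⟩

end IsBlockPerm

section Generated

variable {s m q : ℕ} {τs : Fin m → Perm (Fin q)} {E : Perm (Fin q) → Perm Circ}

theorem SQgrp_le_iff {K : Subgroup (Perm (Fin q))} : SQgrp m q τs ≤ K ↔ ∀ j, τs j ∈ K :=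
  (Subgroup.closure_le _).trans Set.range_subset_iff

variable [NeZero q]

theorem SQgrp_le_zpowers_iff_Qgrp_le_rotations (hE : IsBlockPerm q E) :
    SQgrp m q τs ≤ Subgroup.zpowers (finRotate q) ↔ Qgrp m q τs E ≤ rotations := by
  rw [SQgrp_le_iff, Qgrp, Subgroup.closure_le, Set.range_subset_iff]
  exact forall_congr' fun j => hE.mem_rotations_iff.symm

theorem SQgrp_le_zpowers_iff_Hgrp_commutative (hE : IsBlockPerm q E) {α : Fin s → ℝ} {i : Fin s}
    (hα : Irrational (α i)) :
    SQgrp m q τs ≤ Subgroup.zpowers (finRotate q) ↔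
      ∀ f ∈ Hgrp s m q α τs E, ∀ g ∈ Hgrp s m q α τs E, f * g = g * f := by
  constructor
  · intro hSQ
    have hH : Hgrp s m q α τs E ≤ rotations := by
      rw [Hgrp, Subgroup.closure_le, Set.union_subset_iff, Set.range_subset_iff,
        Set.range_subset_iff]
      exact ⟨fun _ => mem_rotations.2 ⟨_, rfl⟩,
        fun j => hE.mem_rotations_iff.2 (SQgrp_le_iff.1 hSQ j)⟩
    exact fun f hf g hg => setLike_mul_comm (hH hf) (hH hg)
  · refine fun hH => SQgrp_le_iff.2 fun j => mem_zpowers_finRotate_iff.2 ?_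
    refine hE.eq_addRight_of_commute_rot hα (hH _ ?_ _ ?_)
    · exact Subgroup.subset_closure (Or.inr ⟨j, rfl⟩)
    · exact Subgroup.subset_closure (Or.inl ⟨_, rfl⟩)

theorem SQgrp_le_zpowers_iff_Wgrp_commutative :
    SQgrp m q τs ≤ Subgroup.zpowers (finRotate q) ↔
      ∀ f ∈ Wgrp m q τs, ∀ g ∈ Wgrp m q τs, f * g = g * f := by
  constructor
  · intro hSQ
    have hW : Wgrp m q τs ≤ Subgroup.zpowers (finRotate q) := by
      rw [Wgrp, Subgroup.closure_le, Set.singleton_union, Set.insert_subset_iff,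
        Set.range_subset_iff]
      exact ⟨Subgroup.mem_zpowers _, SQgrp_le_iff.1 hSQ⟩
    exact fun f hf g hg => setLike_mul_comm (hW hf) (hW hg)
  · refine fun hW => SQgrp_le_iff.2 fun j => mem_zpowers_finRotate_iff.2 ?_
    refine eq_addRight_of_commute_finRotate (hW _ ?_ _ ?_)
    · exact Subgroup.subset_closure (Or.inr ⟨j, rfl⟩)
    · exact Subgroup.subset_closure (Or.inl rfl)

end Generated

theorem stmt_11_general
    (s m q : ℕ) (hs : 1 ≤ s) (hq : 2 ≤ q)
    (α : Fin s → ℝ) (hα : LinearIndependent ℚ (Fin.cons (1 : ℝ) α))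
    (τs : Fin m → Equiv.Perm (Fin q))
    (E : Equiv.Perm (Fin q) → Equiv.Perm Circ)
    (hE : ∀ (τ : Equiv.Perm (Fin q)) (i : Fin q) (t : ℝ), 0 ≤ t → t < 1 / q →
      E τ ((((i : ℕ) : ℝ) / q + t : ℝ) : Circ) = ((((τ i : ℕ) : ℝ) / q + t : ℝ) : Circ))
    : ((SQgrp m q τs ≤ Subgroup.zpowers (finRotate q)) ↔
        (∀ g ∈ Qgrp m q τs E, ∃ a : Circ, g = Rot a)) ∧
      ((SQgrp m q τs ≤ Subgroup.zpowers (finRotate q)) ↔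
        (∀ f ∈ Hgrp s m q α τs E, ∀ g ∈ Hgrp s m q α τs E, f * g = g * f)) ∧
      ((SQgrp m q τs ≤ Subgroup.zpowers (finRotate q)) ↔
        (∀ f ∈ Wgrp m q τs, ∀ g ∈ Wgrp m q τs, f * g = g * f)) := by
  have : NeZero q := ⟨by omega⟩
  have hα₀ : Irrational (α ⟨0, hs⟩) := irrational_of_linearIndependent_finCons hα _
  refine ⟨(SQgrp_le_zpowers_iff_Qgrp_le_rotations hE).trans ?_,
    SQgrp_le_zpowers_iff_Hgrp_commutative hE hα₀, SQgrp_le_zpowers_iff_Wgrp_commutative⟩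
  exact forall₂_congr fun _ _ => mem_rotations

theorem stmt_11
    (s m q : ℕ) (hs : 1 ≤ s) (hm : 1 ≤ m) (hq : 2 ≤ q)
    (α : Fin s → ℝ) (hα : LinearIndependent ℚ (Fin.cons (1 : ℝ) α))
    (τs : Fin m → Equiv.Perm (Fin q))
    (E : Equiv.Perm (Fin q) → Equiv.Perm Circ)
    (hE : ∀ (τ : Equiv.Perm (Fin q)) (i : Fin q) (t : ℝ), 0 ≤ t → t < 1 / q →
      E τ ((((i : ℕ) : ℝ) / q + t : ℝ) : Circ) = ((((τ i : ℕ) : ℝ) / q + t : ℝ) : Circ))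
    : ((SQgrp m q τs ≤ Subgroup.zpowers (finRotate q)) ↔
        (∀ g ∈ Qgrp m q τs E, ∃ a : Circ, g = Rot a)) ∧
      ((SQgrp m q τs ≤ Subgroup.zpowers (finRotate q)) ↔
        (∀ f ∈ Hgrp s m q α τs E, ∀ g ∈ Hgrp s m q α τs E, f * g = g * f)) ∧
      ((SQgrp m q τs ≤ Subgroup.zpowers (finRotate q)) ↔
        (∀ f ∈ Wgrp m q τs, ∀ g ∈ Wgrp m q τs, f * g = g * f)) :=
  stmt_11_general s m q hs hq α hα τs E hE
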